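/- arXiv:2011.12880 — 4 statements merged into one kernel-verified Lean document; each statement's English description precedes it below -/
import Mathlib

section
/- For every r, s ∈ [0, ∞] with s ≤ r, there exists a sequence (d_n) of positive natural numbers with d_n ≥ d_{n-1} + d_{n-2} for all n ≥ 3, limsup_{n→∞} d_n / 2^n = 2r / log 2, and liminf_{n→∞} d_n / 2^n = 2s / log 2. -/
/-!
Write `d n = ⌊2 ^ n * c n⌋₊`. For `e n = 2 ^ n * c n` the recurrence
`e n + e (n + 1) ≤ e (n + 2)` follows from `(9/5) * e n ≤ e (n + 1)`, since `9/5` exceeds the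
golden ratio; that is, from `(9/10) * c n ≤ c (n + 1)`. So `c` may jump up at will but may only
decay slowly, and floors of superadditive sequences stay superadditive.

We take `c = b + s + (9/10) ^ n`: the base `b n = min B n` tends to `B`; the spike sequence `s`
jumps at `n = 2 ^ k` to a height `min (A - B) k` and then decays by the factor `9/10`, so it is
negligible by `n = 2 ^ (k + 1) - 1`; the last term keeps `d` positive. Along `2 ^ k` the profile
tends to `B + (A - B) = A`, along `2 ^ (k + 1) - 1` to `B`. Taking the floor changes `c n` by less
than `2⁻¹ ^ n`, which changes neither limsup nor liminf.
-/

open Filter Topology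
open scoped NNReal ENNReal

namespace SuperFib

lemma add_le_of_mul_le_succ {q : ℝ≥0} (hq : q + 1 ≤ q ^ 2) {e : ℕ → ℝ≥0}
    (he : ∀ n, q * e n ≤ e (n + 1)) (n : ℕ) : e n + e (n + 1) ≤ e (n + 2) := by
  have h₁ : (q : ℝ) * e n ≤ e (n + 1) := mod_cast he n
  have h₂ : (q : ℝ) * e (n + 1) ≤ e (n + 2) := mod_cast he (n + 1)
  have hq' : (q : ℝ) + 1 ≤ q ^ 2 := mod_cast hq
  exact_mod_cast (by nlinarith [q.2, (e n).2, (e (n + 1)).2] : (e n : ℝ) + e (n + 1) ≤ e (n + 2))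

lemma floor_add_floor_le {R : Type*} [Semiring R] [LinearOrder R] [IsOrderedRing R]
    [FloorSemiring R] {a b : R} (ha : 0 ≤ a) (hb : 0 ≤ b) : ⌊a⌋₊ + ⌊b⌋₊ ≤ ⌊a + b⌋₊ :=
  Nat.le_floor (by push_cast; exact add_le_add (Nat.floor_le ha) (Nat.floor_le hb))

noncomputable def truncNat (X : ℝ≥0∞) (k : ℕ) : ℝ≥0 := (min X k).toNNReal

lemma coe_truncNat (X : ℝ≥0∞) (k : ℕ) : (truncNat X k : ℝ≥0∞) = min X k :=
  ENNReal.coe_toNNReal (min_lt_of_right_lt (ENNReal.natCast_lt_top k)).ne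

lemma coe_truncNat_le (X : ℝ≥0∞) (k : ℕ) : (truncNat X k : ℝ≥0∞) ≤ X :=
  (coe_truncNat X k).trans_le (min_le_left _ _)

lemma truncNat_le (X : ℝ≥0∞) (k : ℕ) : truncNat X k ≤ k := by
  rw [← ENNReal.coe_le_coe, coe_truncNat]; exact min_le_right _ _

lemma monotone_truncNat (X : ℝ≥0∞) : Monotone (truncNat X) := fun j k hjk => by
  rw [← ENNReal.coe_le_coe, coe_truncNat, coe_truncNat]; gcongr

lemma tendsto_truncNat (X : ℝ≥0∞) :
    Tendsto (fun k => (truncNat X k : ℝ≥0∞)) atTop (𝓝 X) := by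
  simpa [coe_truncNat] using tendsto_const_nhds.min ENNReal.tendsto_nat_nhds_top

noncomputable def spike (h : ℕ → ℝ≥0) (n : ℕ) : ℝ≥0 :=
  h (Nat.log 2 n) * (9 / 10) ^ (n - 2 ^ Nat.log 2 n)

lemma spike_two_pow (h : ℕ → ℝ≥0) (k : ℕ) : spike h (2 ^ k) = h k := by
  simp [spike, Nat.log_pow one_lt_two]

lemma spike_two_pow_succ_sub_one (h : ℕ → ℝ≥0) (k : ℕ) :
    spike h (2 ^ (k + 1) - 1) = h k * (9 / 10) ^ (2 ^ k - 1) := by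
  have hk : 1 ≤ 2 ^ k := Nat.one_le_two_pow
  have hlog : Nat.log 2 (2 ^ (k + 1) - 1) = k :=
    Nat.log_eq_of_pow_le_of_lt_pow (by omega) (by omega)
  rw [spike, hlog, pow_succ]
  congr 2
  omega

lemma spike_le (h : ℕ → ℝ≥0) (n : ℕ) : spike h n ≤ h (Nat.log 2 n) :=
  mul_le_of_le_one_right' (pow_le_one₀ zero_le (by bound))

lemma mul_spike_le_spike_succ {h : ℕ → ℝ≥0} (hh : Monotone h) (n : ℕ) :
    9 / 10 * spike h n ≤ spike h (n + 1) := by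
  rcases n.eq_zero_or_pos with rfl | hn0
  · simpa [spike] using mul_le_of_le_one_left zero_le (by bound : (9 / 10 : ℝ≥0) ≤ 1)
  set k := Nat.log 2 n
  have hlt : n + 1 ≤ 2 ^ (k + 1) := Nat.lt_pow_succ_log_self one_lt_two n
  rcases hlt.eq_or_lt with hn | hn
  · rw [hn, spike_two_pow]
    calc 9 / 10 * spike h n ≤ 1 * h k := by gcongr; bound; exact spike_le h n
      _ ≤ h (k + 1) := by rw [one_mul]; exact hh k.le_succ
  · have hpow : 2 ^ k ≤ n := Nat.pow_log_le_self 2 hn0.ne'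
    have hlog : Nat.log 2 (n + 1) = k := Nat.log_eq_of_pow_le_of_lt_pow (by omega) hn
    rw [spike, spike, hlog, Nat.sub_add_comm hpow, pow_succ]
    exact le_of_eq (by ring)

noncomputable def profile (A B : ℝ≥0∞) (n : ℕ) : ℝ≥0 :=
  truncNat B n + spike (truncNat (A - B)) n + (9 / 10) ^ n

variable {A B : ℝ≥0∞}

lemma mul_profile_le_profile_succ (n : ℕ) : 9 / 10 * profile A B n ≤ profile A B (n + 1) := by
  simp only [profile, mul_add]
  gcongr ?_ + ?_ + ?_
  · exact mul_le_of_le_one_left zero_le (by bound) |>.trans (monotone_truncNat B n.le_succ)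
  · exact mul_spike_le_spike_succ (monotone_truncNat _) n
  · rw [pow_succ, mul_comm]

lemma one_le_two_pow_mul_profile (n : ℕ) : 1 ≤ 2 ^ n * profile A B n :=
  calc (1 : ℝ≥0) ≤ (2 * (9 / 10)) ^ n := one_le_pow₀ (by rw [← NNReal.coe_le_coe]; norm_num)
    _ = 2 ^ n * (9 / 10) ^ n := mul_pow _ _ _
    _ ≤ 2 ^ n * profile A B n := by gcongr; exact le_add_self

lemma mul_two_pow_mul_profile_le (n : ℕ) :
    9 / 5 * (2 ^ n * profile A B n) ≤ 2 ^ (n + 1) * profile A B (n + 1) :=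
  calc 9 / 5 * (2 ^ n * profile A B n) = 2 ^ (n + 1) * (9 / 10 * profile A B n) := by
        rw [pow_succ]; ring
    _ ≤ 2 ^ (n + 1) * profile A B (n + 1) := by gcongr; exact mul_profile_le_profile_succ n

noncomputable def superfibSeq (A B : ℝ≥0∞) (n : ℕ) : ℕ := ⌊2 ^ n * profile A B n⌋₊

lemma superfibSeq_pos (n : ℕ) : 0 < superfibSeq A B n :=
  Nat.floor_pos.2 (one_le_two_pow_mul_profile n)

lemma superfibSeq_add_le (n : ℕ) :
    superfibSeq A B n + superfibSeq A B (n + 1) ≤ superfibSeq A B (n + 2) :=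
  (floor_add_floor_le zero_le zero_le).trans <| Nat.floor_mono <|
    add_le_of_mul_le_succ (by rw [← NNReal.coe_le_coe]; norm_num) mul_two_pow_mul_profile_le n

lemma floor_two_pow_mul_div_le (c : ℝ≥0) (n : ℕ) : (⌊2 ^ n * c⌋₊ : ℝ≥0∞) / 2 ^ n ≤ c :=
  ENNReal.div_le_of_le_mul' (by exact_mod_cast Nat.floor_le (2 ^ n * c).2)

lemma le_floor_two_pow_mul_div_add (c : ℝ≥0) (n : ℕ) :
    (c : ℝ≥0∞) ≤ (⌊2 ^ n * c⌋₊ : ℝ≥0∞) / 2 ^ n + 2⁻¹ ^ n := by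
  rw [← ENNReal.inv_pow, ← one_div, ← ENNReal.add_div,
    ENNReal.le_div_iff_mul_le (by simp) (by simp), mul_comm]
  exact_mod_cast (Nat.lt_floor_add_one (2 ^ n * c)).le

lemma limsup_floor_two_pow_mul_div (c : ℕ → ℝ≥0) :
    limsup (fun n => (⌊2 ^ n * c n⌋₊ : ℝ≥0∞) / 2 ^ n) atTop
      = limsup (fun n => (c n : ℝ≥0∞)) atTop := by
  refine le_antisymm (limsup_le_limsup (.of_forall fun n => floor_two_pow_mul_div_le _ n)) ?_
  calc limsup (fun n => (c n : ℝ≥0∞)) atTop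
      ≤ limsup ((fun n => (⌊2 ^ n * c n⌋₊ : ℝ≥0∞) / 2 ^ n) + fun n => 2⁻¹ ^ n) atTop :=
        limsup_le_limsup (.of_forall fun n => le_floor_two_pow_mul_div_add _ n)
    _ = _ := ENNReal.limsup_add_of_right_tendsto_zero
        (ENNReal.tendsto_pow_atTop_nhds_zero_of_lt_one (by norm_num)) _

lemma liminf_floor_two_pow_mul_div (c : ℕ → ℝ≥0) :
    liminf (fun n => (⌊2 ^ n * c n⌋₊ : ℝ≥0∞) / 2 ^ n) atTop
      = liminf (fun n => (c n : ℝ≥0∞)) atTop := by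
  refine le_antisymm (liminf_le_liminf (.of_forall fun n => floor_two_pow_mul_div_le _ n)) ?_
  calc liminf (fun n => (c n : ℝ≥0∞)) atTop
      ≤ liminf ((fun n => (⌊2 ^ n * c n⌋₊ : ℝ≥0∞) / 2 ^ n) + fun n => 2⁻¹ ^ n) atTop :=
        liminf_le_liminf (.of_forall fun n => le_floor_two_pow_mul_div_add _ n)
    _ = _ := ENNReal.liminf_add_of_right_tendsto_zero
        (ENNReal.tendsto_pow_atTop_nhds_zero_of_lt_one (by norm_num)) _

lemma tendsto_nine_tenths_pow : Tendsto (fun n : ℕ => (9 / 10 : ℝ≥0) ^ n) atTop (𝓝 0) :=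
  tendsto_pow_atTop_nhds_zero_of_lt_one zero_le (by rw [← NNReal.coe_lt_coe]; norm_num)

lemma tendsto_truncNat_mul_pow_two_pow_sub_one (X : ℝ≥0∞) :
    Tendsto (fun k => truncNat X k * (9 / 10 : ℝ≥0) ^ (2 ^ k - 1)) atTop (𝓝 0) := by
  have hlim : Tendsto (fun k : ℕ => (k : ℝ≥0) * (9 / 10) ^ k) atTop (𝓝 0) := by
    rw [← NNReal.tendsto_coe]
    push_cast
    exact tendsto_self_mul_const_pow_of_lt_one (by norm_num) (by norm_num)
  refine tendsto_of_tendsto_of_tendsto_of_le_of_le tendsto_const_nhds hlim (fun _ => zero_le)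
    fun k => ?_
  have hk : k ≤ 2 ^ k - 1 := by have := k.lt_two_pow_self; omega
  exact mul_le_mul' (truncNat_le X k) (pow_le_pow_of_le_one zero_le (by bound) hk)

lemma coe_profile_le (n : ℕ) : (profile A B n : ℝ≥0∞) ≤ B + (A - B) + (9 / 10 : ℝ≥0) ^ n := by
  simp only [profile, ENNReal.coe_add, ENNReal.coe_pow]
  gcongr
  · exact coe_truncNat_le B n
  · exact (ENNReal.coe_le_coe.2 (spike_le _ n)).trans (coe_truncNat_le _ _)

lemma truncNat_add_truncNat_le_profile (k : ℕ) :
    truncNat B (2 ^ k) + truncNat (A - B) k ≤ profile A B (2 ^ k) := by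
  rw [profile, spike_two_pow]
  exact le_self_add

lemma profile_two_pow_succ_sub_one (k : ℕ) :
    profile A B (2 ^ (k + 1) - 1) = truncNat B (2 ^ (k + 1) - 1)
      + (truncNat (A - B) k * (9 / 10) ^ (2 ^ k - 1) + (9 / 10) ^ (2 ^ (k + 1) - 1)) := by
  rw [profile, spike_two_pow_succ_sub_one, add_assoc]

lemma limsup_profile (hBA : B ≤ A) : limsup (fun n => (profile A B n : ℝ≥0∞)) atTop = A := by
  have htwo_pow : Tendsto (fun k : ℕ => 2 ^ k) atTop atTop :=
    tendsto_pow_atTop_atTop_of_one_lt one_lt_two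
  refine le_antisymm ?_ ?_
  · have hupper : Tendsto (fun n => B + (A - B) + ((9 / 10 : ℝ≥0) ^ n : ℝ≥0)) atTop (𝓝 A) := by
      simpa [add_tsub_cancel_of_le hBA] using tendsto_const_nhds.add
        (ENNReal.tendsto_coe.2 tendsto_nine_tenths_pow)
    exact (limsup_le_limsup (.of_forall coe_profile_le)).trans_eq hupper.limsup_eq
  · have hlower : Tendsto (fun k => (truncNat B (2 ^ k) + truncNat (A - B) k : ℝ≥0∞)) atTop
        (𝓝 A) := by
      simpa [add_tsub_cancel_of_le hBA] using
        ((tendsto_truncNat B).comp htwo_pow).add (tendsto_truncNat (A - B))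
    calc A = limsup (fun k => (truncNat B (2 ^ k) + truncNat (A - B) k : ℝ≥0∞)) atTop :=
          hlower.limsup_eq.symm
      _ ≤ limsup ((fun n => (profile A B n : ℝ≥0∞)) ∘ fun k => 2 ^ k) atTop :=
          limsup_le_limsup (.of_forall fun k =>
            ENNReal.coe_le_coe.2 (truncNat_add_truncNat_le_profile k))
      _ ≤ _ := htwo_pow.limsup_comp_le_limsup

lemma liminf_profile : liminf (fun n => (profile A B n : ℝ≥0∞)) atTop = B := by
  refine le_antisymm ?_ ?_
  · have hv : Tendsto (fun k : ℕ => 2 ^ (k + 1) - 1) atTop atTop :=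
      tendsto_atTop_mono (fun k => show k ≤ _ by have := (k + 1).lt_two_pow_self; omega) tendsto_id
    have hw : Tendsto (fun k => truncNat (A - B) k * (9 / 10 : ℝ≥0) ^ (2 ^ k - 1)
        + (9 / 10) ^ (2 ^ (k + 1) - 1)) atTop (𝓝 0) := by
      simpa using (tendsto_truncNat_mul_pow_two_pow_sub_one (A - B)).add
        (tendsto_nine_tenths_pow.comp hv)
    calc liminf (fun n => (profile A B n : ℝ≥0∞)) atTop
        ≤ liminf ((fun n => (profile A B n : ℝ≥0∞)) ∘ fun k => 2 ^ (k + 1) - 1) atTop :=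
          hv.liminf_le_liminf_comp
      _ ≤ liminf (fun k => B + (truncNat (A - B) k * (9 / 10 : ℝ≥0) ^ (2 ^ k - 1)
            + (9 / 10) ^ (2 ^ (k + 1) - 1) : ℝ≥0)) atTop :=
          liminf_le_liminf (.of_forall fun k => by
            rw [Function.comp_apply, profile_two_pow_succ_sub_one, ENNReal.coe_add]
            gcongr
            exact coe_truncNat_le B _)
      _ = B := by simpa using (tendsto_const_nhds.add (ENNReal.tendsto_coe.2 hw)).liminf_eq
  · calc B = liminf (fun n => (truncNat B n : ℝ≥0∞)) atTop := (tendsto_truncNat B).liminf_eq.symm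
      _ ≤ _ := liminf_le_liminf (.of_forall fun n => ENNReal.coe_le_coe.2
          (le_add_right le_self_add))

theorem exists_superfib_limsup_liminf (hBA : B ≤ A) :
    ∃ d : ℕ → ℕ, (∀ n, 0 < d n) ∧ (∀ n, d n + d (n + 1) ≤ d (n + 2)) ∧
      limsup (fun n => (d n : ℝ≥0∞) / 2 ^ n) atTop = A ∧
      liminf (fun n => (d n : ℝ≥0∞) / 2 ^ n) atTop = B :=
  ⟨superfibSeq A B, superfibSeq_pos, superfibSeq_add_le,
    (limsup_floor_two_pow_mul_div _).trans (limsup_profile hBA),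
    (liminf_floor_two_pow_mul_div _).trans liminf_profile⟩

end SuperFib

theorem exists_superfib_sequence_with_limsup_liminf (r s : ENNReal) (hs : s ≤ r) :
    ∃ d : ℕ → ℕ,
      (∀ n, 0 < d n) ∧
      (∀ n, 3 ≤ n → d (n - 1) + d (n - 2) ≤ d n) ∧
      Filter.limsup (fun n => (d n : ENNReal) / 2 ^ n) Filter.atTop
        = 2 * r / ENNReal.ofReal (Real.log 2) ∧
      Filter.liminf (fun n => (d n : ENNReal) / 2 ^ n) Filter.atTop
        = 2 * s / ENNReal.ofReal (Real.log 2) := by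
  obtain ⟨d, hpos, hadd, hsup, hinf⟩ := SuperFib.exists_superfib_limsup_liminf
    (A := 2 * r / ENNReal.ofReal (Real.log 2)) (B := 2 * s / ENNReal.ofReal (Real.log 2))
    (by gcongr)
  refine ⟨d, hpos, fun n hn => ?_, hsup, hinf⟩
  obtain ⟨m, rfl⟩ : ∃ m, n = m + 2 := ⟨n - 2, by omega⟩
  simpa [add_comm] using hadd m
end

section
/- For natural numbers l ≤ k ≤ n, the sets ξ_n^k defined by ξ_n^k = 2^{-k}·ξ_{n-k}, where ξ_j = {m/2^j : m ∈ ℕ₀, m ≤ 2^j − 1}, satisfy ξ_n^k + ξ_k^l = ξ_n^l, i.e. the Minkowski sum of ξ_n^k and ξ_k^l equals ξ_n^l as subsets of ℚ. -/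
open Pointwise

/-- `ξ_j = {m / 2^j : m ∈ ℕ₀, m ≤ 2^j - 1}` as a subset of `ℚ`. -/
def xi (j : ℕ) : Set ℚ := {x | ∃ m : ℕ, m ≤ 2 ^ j - 1 ∧ x = (m : ℚ) / 2 ^ j}

/-- `ξ_n^k = 2^{-k} · ξ_{n-k}` as a subset of `ℚ`. -/
def xiK (n k : ℕ) : Set ℚ := {x | ∃ y ∈ xi (n - k), x = y / 2 ^ k}

lemma mem_xiK_iff {n k : ℕ} (hk : k ≤ n) (x : ℚ) :
    x ∈ xiK n k ↔ ∃ m : ℕ, m ≤ 2 ^ (n - k) - 1 ∧ x = (m : ℚ) / 2 ^ n := by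
  have h2 : (2 : ℚ) ^ (n - k) * 2 ^ k = 2 ^ n := by
    rw [← pow_add, Nat.sub_add_cancel hk]
  constructor
  · rintro ⟨y, ⟨m, hm, rfl⟩, rfl⟩
    exact ⟨m, hm, by rw [div_div, h2]⟩
  · rintro ⟨m, hm, rfl⟩
    exact ⟨(m : ℚ) / 2 ^ (n - k), ⟨m, hm, rfl⟩, by rw [div_div, h2]⟩

theorem xiK_add_xiK (l k n : ℕ) (hl : l ≤ k) (hk : k ≤ n) :
    xiK n k + xiK k l = xiK n l := by
  have hln : l ≤ n := hl.trans hk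
  have hsub : (n - k) + (k - l) = n - l := by omega
  have h2 : (2 : ℚ) ^ (n - k) * 2 ^ k = 2 ^ n := by
    rw [← pow_add, Nat.sub_add_cancel hk]
  have h2' : (2 : ℕ) ^ (n - k) ≠ 0 := by positivity
  ext x
  simp only [Set.mem_add]
  constructor
  · rintro ⟨a, ha, b, hb, rfl⟩
    rw [mem_xiK_iff hk] at ha
    rw [mem_xiK_iff hl] at hb
    obtain ⟨ma, hma, rfl⟩ := ha
    obtain ⟨mb, hmb, rfl⟩ := hb
    rw [mem_xiK_iff hln]
    refine ⟨ma + mb * 2 ^ (n - k), ?_, ?_⟩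
    · have h1 : (1:ℕ) ≤ 2 ^ (n - k) := Nat.one_le_two_pow
      have h1' : (1:ℕ) ≤ 2 ^ (k - l) := Nat.one_le_two_pow
      have : 2 ^ (n - k) * 2 ^ (k - l) = 2 ^ (n - l) := by
        rw [← pow_add, hsub]
      calc ma + mb * 2 ^ (n - k) ≤ (2 ^ (n - k) - 1) + (2 ^ (k - l) - 1) * 2 ^ (n - k) := by
            exact Nat.add_le_add hma (Nat.mul_le_mul_right _ hmb)
        _ = 2 ^ (n - l) - 1 := by
            have hBA : 2 ^ (k - l) * 2 ^ (n - k) = 2 ^ (n - l) := by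
              rw [← pow_add]; congr 1; omega
            rw [Nat.sub_mul, one_mul, hBA]
            have hmono : 2 ^ (n - k) ≤ 2 ^ (n - l) := Nat.pow_le_pow_right (by norm_num) (by omega)
            omega
    · push_cast
      have hk2 : (2 : ℚ) ^ k ≠ 0 := by positivity
      have hn2 : (2 : ℚ) ^ n ≠ 0 := by positivity
      field_simp
      rw [← h2]
      ring
  · rw [mem_xiK_iff hln]
    rintro ⟨m, hm, rfl⟩
    refine ⟨(m % 2 ^ (n - k) : ℕ) / 2 ^ n, ?_, (m / 2 ^ (n - k) : ℕ) / 2 ^ k, ?_, ?_⟩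
    · rw [mem_xiK_iff hk]
      refine ⟨m % 2 ^ (n - k), ?_, rfl⟩
      have := Nat.mod_lt m (Nat.pos_of_ne_zero h2')
      omega
    · rw [mem_xiK_iff hl]
      refine ⟨m / 2 ^ (n - k), ?_, rfl⟩
      have hlt : m < 2 ^ (n - l) := by
        have h1 : (1:ℕ) ≤ 2 ^ (n - l) := Nat.one_le_two_pow
        omega
      have : m / 2 ^ (n - k) < 2 ^ (k - l) := by
        apply Nat.div_lt_of_lt_mul
        rw [← pow_add, hsub]; exact hlt
      omega
    · have heq : m % 2 ^ (n - k) + (m / 2 ^ (n - k)) * 2 ^ (n - k) = m :=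
        Nat.mod_add_div' m _
      have hk2 : (2 : ℚ) ^ k ≠ 0 := by positivity
      have hn2 : (2 : ℚ) ^ n ≠ 0 := by positivity
      rw [div_add_div _ _ hn2 hk2, div_eq_div_iff (by positivity) hn2]
      have : ((m % 2 ^ (n - k) : ℕ) : ℚ) + ((m / 2 ^ (n - k) : ℕ) : ℚ) * 2 ^ (n - k) = m := by
        exact_mod_cast congrArg (Nat.cast : ℕ → ℚ) heq
      rw [← h2]
      linear_combination (2:ℚ)^(n-k)*2^k*2^k * this
end

section
/- The set ℤ[1/2] of dyadic rationals, embedded diagonally as Λ = {(g, g) : g ∈ ℤ[1/2]} in ℝ × ℚ_2, is a discrete and cocompact subgroup (uniform lattice) of ℝ × ℚ_2. -/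
open Pointwise

/-- The diagonal embedding of the dyadic rationals `ℤ[1/2]` into `ℝ × ℚ_2`. -/
def dyadicLattice : Set (ℝ × ℚ_[2]) :=
  {x | ∃ q : ℚ, (∃ m : ℤ, ∃ n : ℕ, q = (m : ℚ) / 2 ^ n) ∧ x = ((q : ℝ), (q : ℚ_[2]))}

/-!
Write `ℤ[1/p]` for the rationals `m / p ^ n`. A rational in `ℤ[1/p]` that is a `p`-adic integer
is an integer, so a nonzero point `(q, q)` of the diagonal lattice has `|q| ≥ 1` or `‖q‖_p > 1`,
which makes the lattice discrete. Conversely every `y ∈ ℚ_p` lies within `1` of `ℤ[1/p]`: some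
`p ^ n * y` is in `ℤ_p`, and an integer `m` approximating it to within `p ^ (-n)` gives `m / p ^ n`.
Shifting by an integer then also moves the real coordinate into `[0, 1]`, so the compact set
`[0, 1] × ℤ_p` meets every coset of the lattice.
-/

open Set Metric

section IntAdjoinInv

variable (p : ℕ)

def intAdjoinInv [NeZero p] : AddSubgroup ℚ where
  carrier := {q | ∃ m : ℤ, ∃ n : ℕ, q = m / p ^ n}
  zero_mem' := ⟨0, 0, by simp⟩
  add_mem' := by
    rintro _ _ ⟨m, n, rfl⟩ ⟨m', n', rfl⟩
    refine ⟨m * p ^ n' + m' * p ^ n, n + n', ?_⟩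
    have : (p : ℚ) ≠ 0 := NeZero.ne _
    push_cast
    field_simp
    ring
  neg_mem' := by
    rintro _ ⟨m, n, rfl⟩
    exact ⟨-m, n, by push_cast; ring⟩

variable {p}

theorem mem_intAdjoinInv [NeZero p] {q : ℚ} :
    q ∈ intAdjoinInv p ↔ ∃ m : ℤ, ∃ n : ℕ, q = m / p ^ n :=
  Iff.rfl

theorem intCast_mem_intAdjoinInv [NeZero p] (k : ℤ) : (k : ℚ) ∈ intAdjoinInv p :=
  ⟨k, 0, by simp⟩

variable [Fact p.Prime]

theorem exists_eq_intCast_of_mem_intAdjoinInv {q : ℚ} (hq : q ∈ intAdjoinInv p)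
    (h : ‖(q : ℚ_[p])‖ ≤ 1) : ∃ k : ℤ, q = k := by
  obtain ⟨m, n, rfl⟩ := hq
  have hp : (p : ℚ) ≠ 0 := NeZero.ne _
  have hm : ((m : ℚ) : ℚ_[p]) = (((p : ℚ) ^ n * (m / p ^ n) : ℚ) : ℚ_[p]) := by
    rw [mul_div_cancel₀ _ (pow_ne_zero n hp)]
  have hnorm : ‖(m : ℚ_[p])‖ ≤ (p : ℝ) ^ (-n : ℤ) := by
    rw [← Rat.cast_intCast, hm, Rat.cast_mul, Rat.cast_pow, Rat.cast_natCast, norm_mul,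
      Padic.norm_p_pow]
    exact mul_le_of_le_one_right (by positivity) h
  obtain ⟨k, rfl⟩ := (Padic.norm_int_le_pow_iff_dvd m n).mp hnorm
  exact ⟨k, by push_cast; field_simp⟩

theorem exists_mem_intAdjoinInv_norm_sub_le_one (y : ℚ_[p]) :
    ∃ q ∈ intAdjoinInv p, ‖y - q‖ ≤ 1 := by
  have hp : (1 : ℝ) < p := mod_cast (Fact.out : p.Prime).one_lt
  obtain ⟨n, hn⟩ := pow_unbounded_of_one_lt ‖y‖ hp
  have hpn : ‖(p : ℚ_[p]) ^ n‖ = ((p : ℝ) ^ n)⁻¹ := by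
    rw [Padic.norm_p_pow, zpow_neg, zpow_natCast]
  let z : ℤ_[p] := ⟨p ^ n * y, by
    rw [norm_mul, hpn]
    exact inv_mul_le_one_of_le₀ hn.le (by positivity)⟩
  obtain ⟨m, hm⟩ := PadicInt.denseRange_intCast.exists_dist_lt z
    (by positivity : (0 : ℝ) < ((p : ℝ) ^ n)⁻¹)
  refine ⟨m / p ^ n, ⟨m, n, rfl⟩, ?_⟩
  have hz : y - ((m / p ^ n : ℚ) : ℚ_[p]) = ((p : ℚ_[p]) ^ n)⁻¹ * (z - m) := by
    have : (p : ℚ_[p]) ≠ 0 := NeZero.ne _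
    simp only [z]
    push_cast
    field_simp
  rw [hz, norm_mul, norm_inv, hpn, inv_inv]
  have hm' : ‖(z : ℚ_[p]) - m‖ ≤ ((p : ℝ) ^ n)⁻¹ := by
    simpa [dist_eq_norm, PadicInt.norm_def] using hm.le
  calc (p : ℝ) ^ n * ‖(z : ℚ_[p]) - m‖ ≤ (p : ℝ) ^ n * ((p : ℝ) ^ n)⁻¹ := by gcongr
    _ = 1 := mul_inv_cancel₀ (by positivity)

end IntAdjoinInv

section DiagLattice

variable (p : ℕ) [Fact p.Prime]

noncomputable def diagLattice : AddSubgroup (ℝ × ℚ_[p]) :=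
  (intAdjoinInv p).map ((Rat.castHom ℝ).prod (Rat.castHom ℚ_[p])).toAddMonoidHom

variable {p}

theorem mem_diagLattice {l : ℝ × ℚ_[p]} :
    l ∈ diagLattice p ↔ ∃ q ∈ intAdjoinInv p, ((q : ℝ), (q : ℚ_[p])) = l :=
  Iff.rfl

theorem one_le_norm_of_mem_diagLattice {l : ℝ × ℚ_[p]} (hl : l ∈ diagLattice p) (h0 : l ≠ 0) :
    1 ≤ ‖l‖ := by
  obtain ⟨q, hq, rfl⟩ := mem_diagLattice.mp hl
  by_contra! hlt
  rw [Prod.norm_def, max_lt_iff, Real.norm_eq_abs] at hlt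
  obtain ⟨k, rfl⟩ := exists_eq_intCast_of_mem_intAdjoinInv hq hlt.2.le
  have hk : |(k : ℝ)| < 1 := by simpa using hlt.1
  rw [← Int.cast_abs, ← Int.cast_one, Int.cast_lt, Int.abs_lt_one_iff] at hk
  simp [hk] at h0

instance : DiscreteTopology (diagLattice p) :=
  .of_forall_le_norm one_pos fun l hl ↦
    one_le_norm_of_mem_diagLattice l.2 (by simpa using hl)

theorem Icc_prod_closedBall_add_diagLattice :
    (Icc (0 : ℝ) 1 ×ˢ closedBall (0 : ℚ_[p]) 1) + (diagLattice p : Set (ℝ × ℚ_[p])) = univ := by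
  refine eq_univ_of_forall fun ⟨x, y⟩ ↦ ?_
  obtain ⟨q, hq, hyq⟩ := exists_mem_intAdjoinInv_norm_sub_le_one y
  set r : ℚ := q + ⌊x - q⌋
  have hr : r ∈ intAdjoinInv p := add_mem hq (intCast_mem_intAdjoinInv _)
  refine ⟨(x - r, y - r), ⟨?_, ?_⟩, ((r : ℝ), (r : ℚ_[p])), ⟨r, hr, rfl⟩, by simp⟩
  · have : x - r = Int.fract (x - q) := by rw [Int.fract]; push_cast [r]; ring
    rw [this]
    exact ⟨Int.fract_nonneg _, (Int.fract_lt_one _).le⟩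
  · have : y - r = (y - q) + ((-⌊x - q⌋ : ℤ) : ℚ_[p]) := by push_cast [r]; ring
    rw [mem_closedBall_zero_iff, this]
    exact (Padic.nonarchimedean _ _).trans (max_le hyq (Padic.norm_int_le_one _))

end DiagLattice

theorem coe_diagLattice_two : (diagLattice 2 : Set (ℝ × ℚ_[2])) = dyadicLattice := by
  ext l
  simp [diagLattice, dyadicLattice, mem_intAdjoinInv, eq_comm]

theorem dyadicLattice_is_uniform_lattice :
    ((0 : ℝ × ℚ_[2]) ∈ dyadicLattice) ∧
    (∀ x ∈ dyadicLattice, ∀ y ∈ dyadicLattice, x + y ∈ dyadicLattice) ∧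
    (∀ x ∈ dyadicLattice, -x ∈ dyadicLattice) ∧
    DiscreteTopology dyadicLattice ∧
    ∃ K : Set (ℝ × ℚ_[2]), IsCompact K ∧ K + dyadicLattice = Set.univ := by
  rw [← coe_diagLattice_two]
  exact ⟨zero_mem _, fun _ hx _ hy ↦ add_mem hx hy, fun _ hx ↦ neg_mem hx,
    (inferInstance : DiscreteTopology (diagLattice 2)),
    _, isCompact_Icc.prod (isCompact_closedBall _ _), Icc_prod_closedBall_add_diagLattice⟩
end

section
/- Let G be a locally compact abelian group, H ≤ G a subgroup, and A ⊆ H. Then A is a tile in H (with respect to a Haar measure on H) if and only if A is a tile in G, provided H is open in G. -/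
open Pointwise MeasureTheory

variable {G : Type*} [AddCommGroup G] [TopologicalSpace G] [IsTopologicalAddGroup G]
  [LocallyCompactSpace G] [SigmaCompactSpace G] [MeasurableSpace G] [BorelSpace G]

/-- `A` tiles the set `S` with respect to the measure `μ`: countably many translates
of `A` by elements of `S` cover `S` and distinct translates overlap in a null set. -/
def IsTileIn (μ : Measure G) (A S : Set G) : Prop :=
  ∃ ω : Set G, ω ⊆ S ∧ ω.Countable ∧ A + ω = S ∧
    ∀ g ∈ ω, ∀ h ∈ ω, g ≠ h →
      μ (((fun a => a + g) '' A) ∩ ((fun a => a + h) '' A)) = 0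

/-!
A tiling of the open subgroup `H` by `A ⊆ H` extends to a tiling of `G` by translating it by a
set of coset representatives, which is countable because `G ⧸ H` is discrete and Lindelöf;
translates of `A` lying in different cosets of `H` are disjoint. Conversely, a translate
`A + g` of a tiling of `G` meets `H` exactly when `g ∈ H`, so these translates tile `H`.
-/

section AddGroup

variable {G : Type*} [AddGroup G]

lemma measure_image_add_right [MeasurableSpace G] [MeasurableAdd G]
    (μ : Measure G) [μ.IsAddRightInvariant] (s : Set G) (t : G) :
    μ ((· + t) '' s) = μ s := by
  rw [Set.image_add_right, measure_preimage_add_right]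

lemma image_add_right_inter_image_add_right_add (A : Set G) (g h t : G) :
    (· + (g + t)) '' A ∩ (· + (h + t)) '' A = (· + t) '' ((· + g) '' A ∩ (· + h) '' A) := by
  rw [Set.image_inter (add_left_injective t), Set.image_image, Set.image_image]
  simp only [add_assoc]

lemma AddSubgroup.countable_quotient_of_isOpen [TopologicalSpace G] [SeparatelyContinuousAdd G]
    [LindelofSpace G] (H : AddSubgroup G) (hH : IsOpen (H : Set G)) : Countable (G ⧸ H) :=
  have := QuotientAddGroup.discreteTopology hH
  have : LindelofSpace (G ⧸ H) := Quotient.lindelofSpace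
  countable_of_Lindelof_of_discrete

end AddGroup

section AddCommGroup

variable {G : Type*} [AddCommGroup G] {H : AddSubgroup G} {A : Set G}

lemma AddSubgroup.add_range_out_eq_univ (H : AddSubgroup G) :
    (H : Set G) + Set.range (Quotient.out : G ⧸ H → G) = Set.univ := by
  refine Set.eq_univ_of_forall fun x => ⟨x - (x : G ⧸ H).out, ?_, _, ⟨_, rfl⟩, sub_add_cancel _ _⟩
  rw [SetLike.mem_coe, ← H.neg_mem_iff, neg_sub, ← neg_add_eq_sub]
  exact QuotientAddGroup.eq.1 (QuotientAddGroup.out_eq' _).symm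

lemma QuotientAddGroup.mk_add_out_of_mem {w : G} (hw : w ∈ H) (q : G ⧸ H) :
    ((w + q.out : G) : G ⧸ H) = q := by
  rw [add_comm, QuotientAddGroup.mk_add_of_mem _ hw, QuotientAddGroup.out_eq']

lemma add_inter_addSubgroup (hA : A ⊆ H) (ω : Set G) :
    A + (ω ∩ H) = (A + ω) ∩ H := by
  ext x
  constructor
  · rintro ⟨a, ha, g, ⟨hg, hgH⟩, rfl⟩
    exact ⟨⟨a, ha, g, hg, rfl⟩, H.add_mem (hA ha) hgH⟩
  · rintro ⟨⟨a, ha, g, hg, rfl⟩, hx⟩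
    have hgH : g ∈ H := by simpa using H.sub_mem hx (hA ha)
    exact ⟨a, ha, g, ⟨hg, hgH⟩, rfl⟩

lemma disjoint_image_add_right_of_mk_ne (hA : A ⊆ H) {g h : G}
    (hgh : (g : G ⧸ H) ≠ h) : Disjoint ((· + g) '' A) ((· + h) '' A) := by
  rw [Set.disjoint_left]
  rintro _ ⟨a, ha, rfl⟩ ⟨b, hb, hab⟩
  refine hgh (QuotientAddGroup.eq.2 ?_)
  have : -g + h = a - b := by
    rw [neg_add_eq_sub, sub_eq_sub_iff_add_eq_add, add_comm]
    exact hab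
  rw [this]
  exact H.sub_mem (hA ha) (hA hb)

lemma IsTileIn.inter_addSubgroup [MeasurableSpace G] {μ : Measure G} {S : Set G}
    (hA : A ⊆ H) (hS : IsTileIn μ A S) : IsTileIn μ A (S ∩ H) := by
  obtain ⟨ω, hωS, hωc, hcov, hdisj⟩ := hS
  exact ⟨ω ∩ H, Set.inter_subset_inter_left _ hωS, hωc.mono Set.inter_subset_left,
    hcov ▸ add_inter_addSubgroup hA ω, fun g hg h hh => hdisj g hg.1 h hh.1⟩

lemma IsTileIn.univ_of_addSubgroup [MeasurableSpace G] [MeasurableAdd G] {μ : Measure G}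
    [μ.IsAddRightInvariant] [Countable (G ⧸ H)] (hA : A ⊆ H) (hH : IsTileIn μ A H) :
    IsTileIn μ A Set.univ := by
  obtain ⟨ω, hωH, hωc, hcov, hdisj⟩ := hH
  refine ⟨ω + Set.range (Quotient.out : G ⧸ H → G), Set.subset_univ _,
    hωc.image2 (Set.countable_range _) _, ?_, ?_⟩
  · rw [← add_assoc, hcov, H.add_range_out_eq_univ]
  rintro _ ⟨w₁, hw₁, _, ⟨q₁, rfl⟩, rfl⟩ _ ⟨w₂, hw₂, _, ⟨q₂, rfl⟩, rfl⟩ hne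
  by_cases hq : q₁ = q₂
  · subst hq
    rw [image_add_right_inter_image_add_right_add, measure_image_add_right]
    exact hdisj w₁ hw₁ w₂ hw₂ fun hw => hne (hw ▸ rfl)
  · have hmk : ((w₁ + q₁.out : G) : G ⧸ H) ≠ (w₂ + q₂.out : G) := by
      rwa [QuotientAddGroup.mk_add_out_of_mem (hωH hw₁),
        QuotientAddGroup.mk_add_out_of_mem (hωH hw₂)]
    rw [(disjoint_image_add_right_of_mk_ne hA hmk).inter_eq, measure_empty]

end AddCommGroup

theorem tile_in_open_subgroup_iff_tile_in_group
    (μ : Measure G) [μ.IsAddHaarMeasure]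
    (H : AddSubgroup G) (hH : IsOpen (H : Set G))
    (A : Set G) (hA : A ⊆ (H : Set G)) :
    IsTileIn μ A (H : Set G) ↔ IsTileIn μ A Set.univ := by
  have := H.countable_quotient_of_isOpen hH
  exact ⟨IsTileIn.univ_of_addSubgroup hA, fun h => by simpa using h.inter_addSubgroup hA⟩
end
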